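/- Let Σ be a finite alphabet and M = (S, R, V) a rational Kripke model over Σ. Then for every formula φ of the basic tense logic K_t, the extension [[φ]]_M is a regular language over Σ. -/

import Mathlib

/-- Rational binary relations on words, presented by a regular language over
`Option α × Option α` via the two asynchronous projections. -/
def IsRationalRel {α : Type} (R : Set (List α × List α)) : Prop :=
  ∃ L : Language (Option α × Option α), L.IsRegular ∧
    R = { p | ∃ z ∈ L, p = (z.filterMap Prod.fst, z.filterMap Prod.snd) }

/-- Formulas of the basic tense logic K_t over atomic propositions `Φ`. -/
inductive KtForm (Φ : Type) : Type where
  | atom : Φ → KtForm Φ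
  | neg : KtForm Φ → KtForm Φ
  | disj : KtForm Φ → KtForm Φ → KtForm Φ
  | dia : KtForm Φ → KtForm Φ
  | diaInv : KtForm Φ → KtForm Φ

/-- The extension `[[φ]]` of a K_t formula in the Kripke model `(S, R, V)`. -/
def KtExt {Φ W : Type} (S : Set W) (R : Set (W × W)) (V : Φ → Set W) :
    KtForm Φ → Set W
  | .atom p => V p
  | .neg φ => S \ KtExt S R V φ
  | .disj φ ψ => KtExt S R V φ ∪ KtExt S R V ψ
  | .dia φ => { s | s ∈ S ∧ ∃ t, t ∈ S ∧ (s, t) ∈ R ∧ t ∈ KtExt S R V φ }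
  | .diaInv φ => { s | s ∈ S ∧ ∃ t, t ∈ S ∧ (t, s) ∈ R ∧ t ∈ KtExt S R V φ }

/-!
Regular languages are closed under the Boolean operations, and, by the Myhill–Nerode
characterisation through left quotients, under preimages and images of the erasing morphisms
`List.filterMap f`. A rational relation `R` presented by `L` satisfies
`R⁻¹[X] = p₁ (L ∩ p₂⁻¹ X)` and `R[X] = p₂ (L ∩ p₁⁻¹ X)`, so both diamonds send regular
languages to regular languages, and the theorem follows by induction on the formula.
-/

namespace Language

variable {T U : Type*}

theorem leftQuotient_preimage_filterMap (f : T → Option U) (L : Language U) (x : List T) :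
    leftQuotient (List.filterMap f ⁻¹' L) x =
      List.filterMap f ⁻¹' leftQuotient L (x.filterMap f) := by
  ext y
  show (x ++ y).filterMap f ∈ L ↔ x.filterMap f ++ y.filterMap f ∈ L
  rw [List.filterMap_append]

theorem leftQuotient_image_filterMap (f : T → Option U) (L : Language T) (u : List U) :
    leftQuotient (List.filterMap f '' L) u =
      ⋃ x ∈ {x : List T | x.filterMap f = u}, List.filterMap f '' leftQuotient L x := by
  ext v
  constructor
  · rintro ⟨w, hw, hwuv⟩
    obtain ⟨x, y, rfl, hx, hy⟩ := List.filterMap_eq_append_iff.1 hwuv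
    exact Set.mem_biUnion hx ⟨y, hw, hy⟩
  · intro hv
    obtain ⟨x, rfl, y, hxy, rfl⟩ := Set.mem_iUnion₂.1 hv
    exact ⟨x ++ y, hxy, List.filterMap_append⟩

theorem IsRegular.preimage_filterMap (f : T → Option U) {L : Language U}
    (h : L.IsRegular) : IsRegular (List.filterMap f ⁻¹' L) := by
  refine .of_finite_range_leftQuotient
    ((h.finite_range_leftQuotient.image (List.filterMap f ⁻¹' ·)).subset ?_)
  rintro _ ⟨x, rfl⟩
  exact ⟨_, ⟨_, rfl⟩, (leftQuotient_preimage_filterMap f L x).symm⟩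

/-- Each left quotient of the image is a union of images of left quotients of `L`, so there are
finitely many of them. -/
theorem IsRegular.image_filterMap (f : T → Option U) {L : Language T}
    (h : L.IsRegular) : IsRegular (List.filterMap f '' L) := by
  refine .of_finite_range_leftQuotient
    ((h.finite_range_leftQuotient.powerset.image
      fun A => ⋃ K ∈ A, List.filterMap f '' K).subset ?_)
  rintro _ ⟨u, rfl⟩
  refine ⟨leftQuotient L '' {x | x.filterMap f = u}, Set.image_subset_range _ _, ?_⟩
  exact (Set.biUnion_image ..).trans (leftQuotient_image_filterMap f L u).symm

end Language

namespace IsRationalRel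

variable {α : Type} {R : Set (List α × List α)} {X : Set (List α)}

theorem isRegular_preimage (hR : IsRationalRel R) (hX : Language.IsRegular X) :
    Language.IsRegular (SetRel.preimage R X) := by
  obtain ⟨L, hL, rfl⟩ := hR
  have h : SetRel.preimage {p | ∃ z ∈ L, p = (z.filterMap Prod.fst, z.filterMap Prod.snd)} X =
      List.filterMap Prod.fst '' (L ∩ List.filterMap Prod.snd ⁻¹' X) := by
    ext s
    constructor
    · rintro ⟨_, ht, z, hz, hst⟩
      obtain ⟨rfl, rfl⟩ := Prod.ext_iff.1 hst
      exact ⟨z, ⟨hz, ht⟩, rfl⟩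
    · rintro ⟨z, ⟨hz, ht⟩, rfl⟩
      exact ⟨_, ht, z, hz, rfl⟩
  rw [h]
  exact (hL.inf (hX.preimage_filterMap _)).image_filterMap _

theorem isRegular_image (hR : IsRationalRel R) (hX : Language.IsRegular X) :
    Language.IsRegular (SetRel.image R X) := by
  obtain ⟨L, hL, rfl⟩ := hR
  have h : SetRel.image {p | ∃ z ∈ L, p = (z.filterMap Prod.fst, z.filterMap Prod.snd)} X =
      List.filterMap Prod.snd '' (L ∩ List.filterMap Prod.fst ⁻¹' X) := by
    ext s
    constructor
    · rintro ⟨_, ht, z, hz, hst⟩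
      obtain ⟨rfl, rfl⟩ := Prod.ext_iff.1 hst
      exact ⟨z, ⟨hz, ht⟩, rfl⟩
    · rintro ⟨z, ⟨hz, ht⟩, rfl⟩
      exact ⟨_, ht, z, hz, rfl⟩
  rw [h]
  exact (hL.inf (hX.preimage_filterMap _)).image_filterMap _

end IsRationalRel

section KripkeModel

variable {Φ W : Type} (S : Set W) (R : Set (W × W)) (V : Φ → Set W) (φ : KtForm Φ)

theorem ktExt_dia_eq_inter_preimage :
    KtExt S (R ∩ S ×ˢ S) V (.dia φ) =
      S ∩ SetRel.preimage R (S ∩ KtExt S (R ∩ S ×ˢ S) V φ) := by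
  ext s
  simp only [KtExt, Set.mem_inter_iff, SetRel.mem_preimage, Set.mem_prod]
  grind

theorem ktExt_diaInv_eq_inter_image :
    KtExt S (R ∩ S ×ˢ S) V (.diaInv φ) =
      S ∩ SetRel.image R (S ∩ KtExt S (R ∩ S ×ˢ S) V φ) := by
  ext s
  simp only [KtExt, Set.mem_inter_iff, SetRel.mem_image, Set.mem_prod]
  grind

end KripkeModel

theorem ktExt_isRegular_of_rationalModel_general {α Φ : Type}
    (S : Set (List α)) (hS : Language.IsRegular S)
    (R : Set (List α × List α)) (hR : IsRationalRel R)
    (V : Φ → Set (List α)) (hV : ∀ p, Language.IsRegular (V p))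
    (φ : KtForm Φ) :
    Language.IsRegular (KtExt S (R ∩ S ×ˢ S) V φ) := by
  induction φ with
  | atom p => exact hV p
  | neg φ ih => exact hS.inf ih.compl
  | disj φ ψ ihφ ihψ => exact ihφ.add ihψ
  | dia φ ih =>
    rw [ktExt_dia_eq_inter_preimage]
    exact hS.inf (hR.isRegular_preimage (hS.inf ih))
  | diaInv φ ih =>
    rw [ktExt_diaInv_eq_inter_image]
    exact hS.inf (hR.isRegular_image (hS.inf ih))

/-- In a rational Kripke model `M = (S, R ∩ (S × S), V)` over a finite
alphabet, the extension of every K_t formula is a regular language. -/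
theorem ktExt_isRegular_of_rationalModel {α Φ : Type} [Fintype α]
    (S : Set (List α)) (hS : Language.IsRegular S)
    (R : Set (List α × List α)) (hR : IsRationalRel R)
    (V : Φ → Set (List α)) (hV : ∀ p, Language.IsRegular (V p)) (hVS : ∀ p, V p ⊆ S)
    (φ : KtForm Φ) :
    Language.IsRegular (KtExt S (R ∩ S ×ˢ S) V φ) :=
  ktExt_isRegular_of_rationalModel_general S hS R hR V hV φ
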